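/- arXiv:1301.4317 — 3 statements merged into one kernel-verified Lean document; each statement's English description precedes it below -/
import Mathlib

section
/- Define G₁ as the quadratic expression in Pauli expectation values from Eq. (2) (G₁ equals C²_{1|23}). A three-qubit pure state |ψ⟩ is a product state across the bipartition 1|23 (i.e., |ψ⟩ = |φ₁⟩ ⊗ |φ₂₃⟩) if and only if ⟨G₁⟩_{|ψ⟩⟨ψ|} = 0. -/
/-!
View `ψ` as the `2 × 4` matrix `M i (j, k) = ψ (i, j, k)`. The quartic form obtained from
`16 ⟨G₁⟩` by replacing the constant `3` with `3 ‖ψ‖⁴` is, by a polynomial identity, eight times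
the sum of the squared moduli of all `2 × 2` minors of `M`. So on unit vectors `⟨G₁⟩ = 0` exactly
when every minor vanishes, i.e. when `M` has rank at most one, which is the product condition
across `1|23`.
-/

open scoped ComplexConjugate
open Finset

abbrev Q3 := Fin 2 × Fin 2 × Fin 2

/-- Pauli matrices σ₁, σ₂, σ₃. -/
noncomputable def pσ1 : Matrix (Fin 2) (Fin 2) ℂ := !![0, 1; 1, 0]
noncomputable def pσ2 : Matrix (Fin 2) (Fin 2) ℂ := !![0, -Complex.I; Complex.I, 0]
noncomputable def pσ3 : Matrix (Fin 2) (Fin 2) ℂ := !![1, 0; 0, -1]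
noncomputable def I2 : Matrix (Fin 2) (Fin 2) ℂ := 1

/-- Threefold tensor product operator `X ⊗ Y ⊗ Z` on `ℂ² ⊗ ℂ² ⊗ ℂ²`. -/
noncomputable def op3 (X Y Z : Matrix (Fin 2) (Fin 2) ℂ) : Matrix Q3 Q3 ℂ :=
  Matrix.of fun p q => X p.1 q.1 * Y p.2.1 q.2.1 * Z p.2.2 q.2.2

/-- Expectation value `⟨ψ|X|ψ⟩` (real part). -/
noncomputable def expec (ψ : Q3 → ℂ) (X : Matrix Q3 Q3 ℂ) : ℝ :=
  (∑ p, ∑ q, conj (ψ p) * X p q * ψ q).re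

/-- Reduced density matrix on the first qubit. -/
noncomputable def rho1 (ψ : Q3 → ℂ) : Matrix (Fin 2) (Fin 2) ℂ :=
  Matrix.of fun i i' => ∑ j, ∑ k, ψ (i, j, k) * conj (ψ (i', j, k))

/-- The quadratic Pauli-expectation expression `⟨G₁⟩` of Eq. (2). -/
noncomputable def G1 (ψ : Q3 → ℂ) : ℝ :=
  (1 / 16) * (3
    - expec ψ (op3 I2 I2 pσ3) ^ 2 - expec ψ (op3 I2 pσ3 I2) ^ 2
    - 3 * expec ψ (op3 pσ3 I2 I2) ^ 2
    + expec ψ (op3 pσ3 pσ3 I2) ^ 2 + expec ψ (op3 pσ3 I2 pσ3) ^ 2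
    - expec ψ (op3 I2 pσ3 pσ3) ^ 2 + expec ψ (op3 pσ3 pσ3 pσ3) ^ 2
    - 3 * expec ψ (op3 pσ1 I2 I2) ^ 2 + expec ψ (op3 pσ1 I2 pσ3) ^ 2
    + expec ψ (op3 pσ1 pσ3 I2) ^ 2 + expec ψ (op3 pσ1 pσ3 pσ3) ^ 2
    - 3 * expec ψ (op3 pσ2 I2 I2) ^ 2 + expec ψ (op3 pσ2 I2 pσ3) ^ 2
    + expec ψ (op3 pσ2 pσ3 I2) ^ 2 + expec ψ (op3 pσ2 pσ3 pσ3) ^ 2)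

theorem pauli_sum_eq_sum_normSq_minors (ψ : Q3 → ℂ) :
    3 * (∑ p, Complex.normSq (ψ p)) ^ 2
    - expec ψ (op3 I2 I2 pσ3) ^ 2 - expec ψ (op3 I2 pσ3 I2) ^ 2
    - 3 * expec ψ (op3 pσ3 I2 I2) ^ 2
    + expec ψ (op3 pσ3 pσ3 I2) ^ 2 + expec ψ (op3 pσ3 I2 pσ3) ^ 2
    - expec ψ (op3 I2 pσ3 pσ3) ^ 2 + expec ψ (op3 pσ3 pσ3 pσ3) ^ 2
    - 3 * expec ψ (op3 pσ1 I2 I2) ^ 2 + expec ψ (op3 pσ1 I2 pσ3) ^ 2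
    + expec ψ (op3 pσ1 pσ3 I2) ^ 2 + expec ψ (op3 pσ1 pσ3 pσ3) ^ 2
    - 3 * expec ψ (op3 pσ2 I2 I2) ^ 2 + expec ψ (op3 pσ2 I2 pσ3) ^ 2
    + expec ψ (op3 pσ2 pσ3 I2) ^ 2 + expec ψ (op3 pσ2 pσ3 pσ3) ^ 2
    = 8 * ∑ x, ∑ y, Complex.normSq (ψ (0, x) * ψ (1, y) - ψ (0, y) * ψ (1, x)) := by
  simp only [expec, op3, pσ1, pσ2, pσ3, I2, Fintype.sum_prod_type, Fin.sum_univ_two,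
    Matrix.of_apply, Matrix.one_apply, Matrix.cons_val', Matrix.cons_val_zero, Matrix.cons_val_one,
    Matrix.cons_val_fin_one, Matrix.empty_val']
  norm_num [Complex.normSq_apply]
  ring

theorem G1_eq_half_sum_normSq_minors (ψ : Q3 → ℂ) (hψ : ∑ p, Complex.normSq (ψ p) = 1) :
    G1 ψ = 1 / 2 * ∑ x, ∑ y, Complex.normSq (ψ (0, x) * ψ (1, y) - ψ (0, y) * ψ (1, x)) := by
  have h := pauli_sum_eq_sum_normSq_minors ψ
  rw [hψ, one_pow, mul_one] at h
  unfold G1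
  linarith

theorem sum_sum_normSq_eq_zero_iff {ι κ : Type*} [Fintype ι] [Fintype κ] (f : ι → κ → ℂ) :
    ∑ x, ∑ y, Complex.normSq (f x y) = 0 ↔ ∀ x y, f x y = 0 := by
  have hrow : ∀ x, 0 ≤ ∑ y, Complex.normSq (f x y) := fun x =>
    Finset.sum_nonneg fun y _ => Complex.normSq_nonneg (f x y)
  simp only [Finset.sum_eq_zero_iff_of_nonneg fun x _ => hrow x,
    Finset.sum_eq_zero_iff_of_nonneg fun y _ => Complex.normSq_nonneg _, Complex.normSq_eq_zero,
    Finset.mem_univ, true_implies]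

theorem exists_eq_mul_iff_mul_eq_mul {ι K : Type*} [Field K] (f : Fin 2 → ι → K) :
    (∃ (u : Fin 2 → K) (v : ι → K), ∀ i x, f i x = u i * v x) ↔
      ∀ x y, f 0 x * f 1 y = f 0 y * f 1 x := by
  constructor
  · rintro ⟨u, v, h⟩ x y
    simp only [h]
    ring
  · intro hminor
    by_cases hzero : ∀ x, f 0 x = 0
    · refine ⟨![0, 1], f 1, fun i x => ?_⟩
      fin_cases i <;> simp [hzero]
    · push Not at hzero
      obtain ⟨x₀, hx₀⟩ := hzero
      refine ⟨![1, f 1 x₀ / f 0 x₀], f 0, fun i x => ?_⟩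
      fin_cases i
      · simp
      · simp only [Fin.mk_one, Matrix.cons_val_one, Matrix.cons_val_zero]
        field_simp
        linear_combination hminor x₀ x

theorem stmt4 (ψ : Q3 → ℂ) (hψ : ∑ p, Complex.normSq (ψ p) = 1) :
    (∃ (φ1 : Fin 2 → ℂ) (φ23 : Fin 2 → Fin 2 → ℂ),
        ∀ i j k, ψ (i, j, k) = φ1 i * φ23 j k) ↔ G1 ψ = 0 := by
  rw [G1_eq_half_sum_normSq_minors ψ hψ, mul_eq_zero, or_iff_right (by norm_num),
    sum_sum_normSq_eq_zero_iff]
  simp only [sub_eq_zero]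
  rw [← exists_eq_mul_iff_mul_eq_mul fun i x => ψ (i, x)]
  constructor
  · rintro ⟨φ1, φ23, h⟩
    exact ⟨φ1, fun x => φ23 x.1 x.2, fun i x => h i x.1 x.2⟩
  · rintro ⟨u, v, h⟩
    exact ⟨u, fun j k => v (j, k), fun i j k => h i (j, k)⟩
end

section
/- If a three-qubit pure state |ψ⟩ factors across the bipartition 1|23 and also across the bipartition 2|13, then it factors across the bipartition 12|3 as well (and hence is fully separable). -/
/-! Write `ψ (i, j, k) = a i * B j k = b j * C i k`. If `a i₀ ≠ 0`, reading the second identity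
at `i = i₀` gives `B j k = b j * (C i₀ k / a i₀)`, so `ψ = a ⊗ b ⊗ c` with `c = C i₀ / a i₀`;
if `a = 0`, then `ψ = 0` is trivially a product. -/

open scoped ComplexConjugate
open Finset

/-- `ψ` factors across the bipartition 1|23. -/
def Sep1 (ψ : Q3 → ℂ) : Prop :=
  ∃ (φ : Fin 2 → ℂ) (χ : Fin 2 → Fin 2 → ℂ), ∀ i j k, ψ (i, j, k) = φ i * χ j k

/-- `ψ` factors across the bipartition 2|13. -/
def Sep2 (ψ : Q3 → ℂ) : Prop :=
  ∃ (φ : Fin 2 → ℂ) (χ : Fin 2 → Fin 2 → ℂ), ∀ i j k, ψ (i, j, k) = φ j * χ i k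

/-- `ψ` factors across the bipartition 12|3. -/
def Sep3 (ψ : Q3 → ℂ) : Prop :=
  ∃ (χ : Fin 2 → Fin 2 → ℂ) (φ : Fin 2 → ℂ), ∀ i j k, ψ (i, j, k) = χ i j * φ k

theorem exists_eq_mul_mul_of_mul_eq_mul {K ι κ τ : Type*} [Field K] {a : ι → K} {b : κ → K}
    {B : κ → τ → K} {C : ι → τ → K} (h : ∀ i j k, a i * B j k = b j * C i k) :
    ∃ c : τ → K, ∀ i j k, a i * B j k = a i * b j * c k := by
  by_cases ha : ∀ i, a i = 0
  · exact ⟨0, fun i j k => by simp [ha i]⟩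
  obtain ⟨i₀, hi₀⟩ := not_forall.mp ha
  refine ⟨fun k => C i₀ k / a i₀, fun i j k => ?_⟩
  have hB : B j k = b j * C i₀ k / a i₀ := by rw [eq_div_iff hi₀, mul_comm, h]
  rw [hB]
  ring

theorem stmt6_general (ψ : Q3 → ℂ)
    (h1 : Sep1 ψ) (h2 : Sep2 ψ) :
    Sep3 ψ ∧ ∃ (φ1 φ2 φ3 : Fin 2 → ℂ), ∀ i j k, ψ (i, j, k) = φ1 i * φ2 j * φ3 k := by
  obtain ⟨a, B, hB⟩ := h1
  obtain ⟨b, C, hC⟩ := h2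
  obtain ⟨c, hc⟩ := exists_eq_mul_mul_of_mul_eq_mul fun i j k => (hB i j k).symm.trans (hC i j k)
  have hψ : ∀ i j k, ψ (i, j, k) = a i * b j * c k := fun i j k => (hB i j k).trans (hc i j k)
  exact ⟨⟨fun i j => a i * b j, c, hψ⟩, a, b, c, hψ⟩

theorem stmt6 (ψ : Q3 → ℂ) (hψ : ∑ p, Complex.normSq (ψ p) = 1)
    (h1 : Sep1 ψ) (h2 : Sep2 ψ) :
    Sep3 ψ ∧ ∃ (φ1 φ2 φ3 : Fin 2 → ℂ), ∀ i j k, ψ (i, j, k) = φ1 i * φ2 j * φ3 k :=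
  stmt6_general ψ h1 h2
end

section
/- If nonnegative reals a_i and real numbers b_i, c_i satisfy a_i² ≥ b_i² + c_i² + x for each i = 1,…,n, where x ≥ 0 is fixed, then for any convex weights p_i (p_i ≥ 0, Σ p_i = 1) one has (Σ p_i a_i)² ≥ (Σ p_i b_i)² + (Σ p_i c_i)² + x. -/
open Finset

theorem norm_sum_smul_le_sum_mul {ι E : Type*} [SeminormedAddCommGroup E] [NormedSpace ℝ E]
    (s : Finset ι) {p a : ι → ℝ} {v : ι → E} (hp : ∀ i ∈ s, 0 ≤ p i)
    (hv : ∀ i ∈ s, ‖v i‖ ≤ a i) : ‖∑ i ∈ s, p i • v i‖ ≤ ∑ i ∈ s, p i * a i :=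
  calc ‖∑ i ∈ s, p i • v i‖ ≤ ∑ i ∈ s, ‖p i • v i‖ := norm_sum_le _ _
    _ = ∑ i ∈ s, p i * ‖v i‖ := sum_congr rfl fun i hi => by
      rw [norm_smul, Real.norm_of_nonneg (hp i hi)]
    _ ≤ ∑ i ∈ s, p i * a i := sum_le_sum fun i hi => mul_le_mul_of_nonneg_left (hv i hi) (hp i hi)

/- `‖v‖² + x ≤ a²` with `a ≥ 0` says that `(v, √x)` has norm at most `a` in the `L²` product
`E × ℝ`, and averaging the lifts `(v i, √x)` keeps the last coordinate `√x`. -/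
theorem sq_norm_sum_smul_add_le_sq_sum_mul {ι E : Type*} [SeminormedAddCommGroup E]
    [NormedSpace ℝ E] (s : Finset ι) {p a : ι → ℝ} {v : ι → E} {x : ℝ} (hx : 0 ≤ x)
    (hp : ∀ i ∈ s, 0 ≤ p i) (hps : ∑ i ∈ s, p i = 1) (ha : ∀ i ∈ s, 0 ≤ a i)
    (hv : ∀ i ∈ s, ‖v i‖ ^ 2 + x ≤ a i ^ 2) :
    ‖∑ i ∈ s, p i • v i‖ ^ 2 + x ≤ (∑ i ∈ s, p i * a i) ^ 2 := by
  have norm_sq_lift (u : E) : ‖WithLp.toLp 2 (u, √x)‖ ^ 2 = ‖u‖ ^ 2 + x := by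
    simp [WithLp.prod_norm_sq_eq_of_L2, Real.sq_sqrt hx]
  have hlift : ∀ i ∈ s, ‖WithLp.toLp 2 (v i, √x)‖ ≤ a i := fun i hi =>
    (pow_le_pow_iff_left₀ (norm_nonneg _) (ha i hi) two_ne_zero).1 <| by
      rw [norm_sq_lift]; exact hv i hi
  have hsum : ∑ i ∈ s, p i • WithLp.toLp 2 (v i, √x)
      = WithLp.toLp 2 (∑ i ∈ s, p i • v i, √x) := by
    simp_rw [← WithLp.toLp_smul, ← WithLp.toLp_sum]
    congr 1
    ext <;> simp [Prod.fst_sum, Prod.snd_sum, ← sum_mul, hps]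
  rw [← norm_sq_lift, ← hsum]
  exact pow_le_pow_left₀ (norm_nonneg _) (norm_sum_smul_le_sum_mul s hp hlift) 2

theorem stmt13 (n : ℕ) (a b c p : Fin n → ℝ) (x : ℝ)
    (ha : ∀ i, 0 ≤ a i) (hx : 0 ≤ x)
    (h : ∀ i, a i ^ 2 ≥ b i ^ 2 + c i ^ 2 + x)
    (hp : ∀ i, 0 ≤ p i) (hps : ∑ i, p i = 1) :
    (∑ i, p i * a i) ^ 2 ≥ (∑ i, p i * b i) ^ 2 + (∑ i, p i * c i) ^ 2 + x := by
  have sq_norm_mk (u w : ℝ) : ‖(u + w * Complex.I : ℂ)‖ ^ 2 = u ^ 2 + w ^ 2 := by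
    rw [Complex.sq_norm, Complex.normSq_add_mul_I]
  have hsum : ∑ i, p i • (b i + c i * Complex.I : ℂ)
      = ((∑ i, p i * b i : ℝ) : ℂ) + (∑ i, p i * c i : ℝ) * Complex.I := by
    simp only [Complex.real_smul]
    push_cast
    simp only [mul_add, sum_add_distrib, sum_mul, mul_assoc]
  have hcomb := sq_norm_sum_smul_add_le_sq_sum_mul (v := fun i => (b i + c i * Complex.I : ℂ))
    univ hx (fun i _ => hp i) hps (fun i _ => ha i) (fun i _ => by rw [sq_norm_mk]; exact h i)
  rwa [hsum, sq_norm_mk] at hcomb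
end
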